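/- arXiv:2312.07450 — 3 statements merged into one kernel-verified Lean document; each statement's English description precedes it below -/
import Mathlib

section
/- Let R be a commutative ring and s_1,…,s_n, t_1,…,t_n ∈ R. Define x_{1j} = s_1 t_j + s_j t_1 and x_{ij} = s_i t_j for 1 < i < j. Then for all indices 1 < i_2 < j_1 < j_2 < j_3 < i_3 ≤ n, the 3×3 matrix with rows (x_{1,j_1}, x_{1,j_2}, x_{1,j_3}), (x_{i_2,j_1}, x_{i_2,j_2}, x_{i_2,j_3}), (−x_{j_1,i_3}, −x_{j_2,i_3}, −x_{j_3,i_3}) has determinant zero. -/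
/-!
Every row of the matrix is an `R`-linear combination of the two vectors `(t_{j₁}, t_{j₂}, t_{j₃})`
and `(s_{j₁}, s_{j₂}, s_{j₃})`: the rows have coefficients `(s₁, t₁)`, `(s_{i₂}, 0)` and
`(0, -t_{i₃})`. So the matrix is a product `A * B` through `R²`, and such a product of a
`3 × 2` and a `2 × 3` matrix has vanishing determinant.
-/

namespace Matrix

variable {R m k : Type*} [CommRing R] [Fintype m] [DecidableEq m] [Fintype k]

/-- Padding `A` with zero columns and `B` with zero rows makes the factorization square, and the
padded `A` has a zero column. -/
theorem det_mul_eq_zero_of_card_lt (A : Matrix m k R) (B : Matrix k m R)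
    (h : Fintype.card k < Fintype.card m) : (A * B).det = 0 := by
  let l := Fin (Fintype.card m - Fintype.card k)
  have hcard : Fintype.card m = Fintype.card (k ⊕ l) := by
    rw [Fintype.card_sum, Fintype.card_fin]; omega
  let e : m ≃ k ⊕ l := Fintype.equivOfCardEq hcard
  have hpad : A * B = (fromCols A (0 : Matrix m l R)).submatrix id e *
      (fromRows B (0 : Matrix l m R)).submatrix e id := by
    rw [submatrix_mul_equiv, fromCols_mul_fromRows, Matrix.zero_mul, add_zero,
      submatrix_id_id]
  rw [hpad, det_mul, det_eq_zero_of_column_eq_zero (e.symm (Sum.inr ⟨0, by omega⟩))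
    (fun _ => by simp), zero_mul]

end Matrix

/-- Let `x_{1j} = s_1 t_j + s_j t_1` and `x_{ij} = s_i t_j` for `1 < i < j ≤ n` over a
commutative ring. Then for all `1 < i₂ < j₁ < j₂ < j₃ < i₃ ≤ n`, the 3×3 matrix with
rows `(x_{1,j₁}, x_{1,j₂}, x_{1,j₃})`, `(x_{i₂,j₁}, x_{i₂,j₂}, x_{i₂,j₃})`,
`(−x_{j₁,i₃}, −x_{j₂,i₃}, −x_{j₃,i₃})` has determinant zero. -/
theorem rank_factorization_three_by_three_minors {R : Type*} [CommRing R] (n : ℕ)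
    (s t : ℕ → R) (x : ℕ → ℕ → R)
    (hx1 : ∀ j, 1 < j → j ≤ n → x 1 j = s 1 * t j + s j * t 1)
    (hx : ∀ i j, 1 < i → i < j → j ≤ n → x i j = s i * t j) :
    ∀ i₂ j₁ j₂ j₃ i₃, 1 < i₂ → i₂ < j₁ → j₁ < j₂ → j₂ < j₃ → j₃ < i₃ → i₃ ≤ n →
      Matrix.det !![x 1 j₁, x 1 j₂, x 1 j₃;
                    x i₂ j₁, x i₂ j₂, x i₂ j₃;
                    -(x j₁ i₃), -(x j₂ i₃), -(x j₃ i₃)] = 0 := by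
  intro i₂ j₁ j₂ j₃ i₃ h₁ h₂ h₃ h₄ h₅ h₆
  rw [hx1 j₁ (by omega) (by omega), hx1 j₂ (by omega) (by omega), hx1 j₃ (by omega) (by omega),
    hx i₂ j₁ h₁ h₂ (by omega), hx i₂ j₂ h₁ (by omega) (by omega),
    hx i₂ j₃ h₁ (by omega) (by omega), hx j₁ i₃ (by omega) (by omega) h₆,
    hx j₂ i₃ (by omega) (by omega) h₆, hx j₃ i₃ (by omega) (by omega) h₆]
  have hfactor : !![s 1 * t j₁ + s j₁ * t 1, s 1 * t j₂ + s j₂ * t 1, s 1 * t j₃ + s j₃ * t 1;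
      s i₂ * t j₁, s i₂ * t j₂, s i₂ * t j₃;
      -(s j₁ * t i₃), -(s j₂ * t i₃), -(s j₃ * t i₃)] =
      !![s 1, t 1; s i₂, 0; 0, -t i₃] * !![t j₁, t j₂, t j₃; s j₁, s j₂, s j₃] := by
    ext i j
    fin_cases i <;> fin_cases j <;>
      simp only [Matrix.mul_apply, Fin.sum_univ_two, Matrix.of_apply, Matrix.cons_val',
        Matrix.cons_val, Matrix.cons_val_zero, Matrix.cons_val_one, Matrix.cons_val_fin_one,
        Fin.isValue, Fin.mk_one, Fin.zero_eta, Fin.reduceFinMk] <;> ring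
  rw [hfactor]
  exact Matrix.det_mul_eq_zero_of_card_lt _ _ (by simp)
end

section
/- Let Δ_n be the simplicial complex on the ground set S_n = {(i,j) : 1 ≤ i < j ≤ n} whose minimal non-faces are {(i,ℓ),(j,k)} for 1 < i < j < k < ℓ ≤ n and {(1,j_1),(i_2,j_2),(j_3,i_3)} for 1 < i_2 < j_1 < j_2 < j_3 < i_3 ≤ n. Then for n ≥ 6, every set of the form F = {(1,2),(1,n−2),(1,n−1),(1,n)} ∪ D, where D is a Dyck path from (2,3) to (n−1,n), is a facet of Δ_n of cardinality 2n−1. -/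
/-!
A Dyck path is a chain in the product order of `ℕ × ℕ`, so no two of its points are nested
intervals; and a triple non-face would need a point `(1, j)` with `3 ≤ j ≤ n - 3`, which is
neither on the path nor among the four extra points. Hence `F` is a face.
For maximality, a monotone lattice path separates its bounding box: a point `(a, b)` with
`a ≥ 2` off the path is nested with a point of the path. A point `(1, b)` not in `F` has
`3 ≤ b ≤ n - 3`; the vertical step of the path into row `b + 1` starts at some `(c, b)` with
`c < b`, and `{(1, b), (c, b + 1), (n - 1, n)}` is a triple non-face. Each step raises the
coordinate sum by one, so the path has `2n - 5` points.
-/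

/-- The ground set `S_n = {(i,j) : 1 ≤ i < j ≤ n}`. -/
def groundSet (n : ℕ) : Finset (ℕ × ℕ) :=
  ((Finset.range (n + 1)) ×ˢ (Finset.range (n + 1))).filter
    (fun p => 1 ≤ p.1 ∧ p.1 < p.2)

/-- The minimal non-faces of the complex `Δ_n`: the pairs `{(i,ℓ),(j,k)}` with
`1 < i < j < k < ℓ ≤ n` and the triples `{(1,j₁),(i₂,j₂),(j₃,i₃)}` with
`1 < i₂ < j₁ < j₂ < j₃ < i₃ ≤ n`. -/
def IsMinNonface (n : ℕ) (N : Finset (ℕ × ℕ)) : Prop :=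
  (∃ i j k ℓ, 1 < i ∧ i < j ∧ j < k ∧ k < ℓ ∧ ℓ ≤ n ∧
    N = {(i, ℓ), (j, k)}) ∨
  (∃ i₂ j₁ j₂ j₃ i₃, 1 < i₂ ∧ i₂ < j₁ ∧ j₁ < j₂ ∧ j₂ < j₃ ∧ j₃ < i₃ ∧ i₃ ≤ n ∧
    N = {(1, j₁), (i₂, j₂), (j₃, i₃)})

/-- Faces of `Δ_n`: subsets of the ground set containing no minimal non-face. -/
def IsFaceDelta (n : ℕ) (F : Finset (ℕ × ℕ)) : Prop :=
  F ⊆ groundSet n ∧ ∀ N, IsMinNonface n N → ¬ N ⊆ F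

/-- Facets of `Δ_n`: faces maximal with respect to inclusion. -/
def IsFacetDelta (n : ℕ) (F : Finset (ℕ × ℕ)) : Prop :=
  IsFaceDelta n F ∧ ∀ F', IsFaceDelta n F' → F ⊆ F' → F = F'

/-- `D` is (the set of lattice points of) a Dyck path from `(2,3)` to `(n−1,n)`: a
monotone lattice path with steps `(1,0)` and `(0,1)` all of whose points `(a,b)`
satisfy `a < b`. -/
def IsDyckSet (n : ℕ) (D : Finset (ℕ × ℕ)) : Prop :=
  ∃ (m : ℕ) (p : ℕ → ℕ × ℕ), p 0 = (2, 3) ∧ p m = (n - 1, n) ∧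
    (∀ i < m, p (i + 1) = ((p i).1 + 1, (p i).2) ∨ p (i + 1) = ((p i).1, (p i).2 + 1)) ∧
    (∀ i ≤ m, (p i).1 < (p i).2) ∧
    D = (Finset.range (m + 1)).image p

def IsLatticePath (p : ℕ → ℕ × ℕ) (m : ℕ) : Prop :=
  ∀ i < m, p (i + 1) = ((p i).1 + 1, (p i).2) ∨ p (i + 1) = ((p i).1, (p i).2 + 1)

/-- Read as intervals, `[x.1, x.2]` strictly contains `[y.1, y.2]`, as in the pair non-faces
of `Δ_n`. -/
def Nests (x y : ℕ × ℕ) : Prop :=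
  x.1 < y.1 ∧ y.2 < x.2

namespace IsLatticePath

variable {p : ℕ → ℕ × ℕ} {m : ℕ}

lemma of_succ (hp : IsLatticePath p (m + 1)) : IsLatticePath p m :=
  fun i hi => hp i (by omega)

lemma monotoneOn (hp : IsLatticePath p m) : MonotoneOn p (Set.Iic m) := by
  refine monotoneOn_of_le_add_one Set.ordConnected_Iic fun i _ _ hi => ?_
  rcases hp i hi with h | h <;> simp [h, Prod.le_def]

lemma fst_add_snd (hp : IsLatticePath p m) {i : ℕ} (hi : i ≤ m) :
    (p i).1 + (p i).2 = (p 0).1 + (p 0).2 + i := by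
  induction i with
  | zero => rfl
  | succ i ih =>
    have := ih (by omega)
    rcases hp i hi with h | h <;> rw [h] <;> dsimp only <;> omega

lemma card_image_range (hp : IsLatticePath p m) :
    ((Finset.range (m + 1)).image p).card = m + 1 := by
  rw [Finset.card_image_of_injOn, Finset.card_range]
  intro i hi j hj hij
  simp only [Finset.coe_range, Set.mem_Iio] at hi hj
  have h := hp.fst_add_snd (Nat.lt_succ_iff.mp hi)
  rw [hij, hp.fst_add_snd (Nat.lt_succ_iff.mp hj)] at h
  omega

lemma exists_eq_or_nests (hp : IsLatticePath p m) {q : ℕ × ℕ} (h0 : p 0 ≤ q)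
    (hm : q ≤ p m) :
    (∃ i ≤ m, p i = q) ∨ ∃ i ≤ m, Nests (p i) q ∨ Nests q (p i) := by
  induction m with
  | zero => exact Or.inl ⟨0, le_rfl, le_antisymm h0 hm⟩
  | succ m ih =>
    by_cases hq : q ≤ p m
    · rcases ih hp.of_succ hq with ⟨i, hi, h⟩ | ⟨i, hi, h⟩
      exacts [Or.inl ⟨i, by omega, h⟩, Or.inr ⟨i, by omega, h⟩]
    · obtain ⟨a, b⟩ := q
      simp only [Prod.le_def, not_and_or, not_le] at hq hm
      rcases hp m (by omega) with h | h <;> rw [h] at hm <;> dsimp only at hm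
      · rcases eq_or_lt_of_le hm.2 with h2 | h2
        · exact Or.inl ⟨m + 1, le_rfl, by rw [h, Prod.mk.injEq]; omega⟩
        · exact Or.inr ⟨m, by omega, Or.inl ⟨by omega, h2⟩⟩
      · rcases eq_or_lt_of_le hm.1 with h1 | h1
        · exact Or.inl ⟨m + 1, le_rfl, by rw [h, Prod.mk.injEq]; omega⟩
        · exact Or.inr ⟨m, by omega, Or.inr ⟨h1, by omega⟩⟩

lemma exists_vertical_step_to (hp : IsLatticePath p m) {h : ℕ} (h0 : (p 0).2 < h)
    (hm : h ≤ (p m).2) : ∃ i < m, (p i).2 + 1 = h ∧ p (i + 1) = ((p i).1, h) := by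
  induction m with
  | zero => omega
  | succ m ih =>
    by_cases hh : h ≤ (p m).2
    · obtain ⟨i, hi, hstep⟩ := ih hp.of_succ hh
      exact ⟨i, by omega, hstep⟩
    · rcases hp m (by omega) with hs | hs <;> rw [hs] at hm <;> dsimp only at hm
      · omega
      · exact ⟨m, by omega, by omega, by rw [hs, show (p m).2 + 1 = h by omega]⟩

end IsLatticePath

namespace IsDyckSet

variable {n : ℕ} {D : Finset (ℕ × ℕ)}

lemma bounds (hD : IsDyckSet n D) {x : ℕ × ℕ} (hx : x ∈ D) :
    2 ≤ x.1 ∧ x.1 < x.2 ∧ x.2 ≤ n := by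
  obtain ⟨m, p, h0, hm, (hp : IsLatticePath p m), hlt, rfl⟩ := hD
  obtain ⟨i, hi, rfl⟩ := Finset.mem_image.mp hx
  have hi : i ≤ m := Nat.lt_succ_iff.mp (Finset.mem_range.mp hi)
  have hlo : p 0 ≤ p i := hp.monotoneOn (Set.mem_Iic.mpr (Nat.zero_le m)) hi (Nat.zero_le i)
  have hhi : p i ≤ p m := hp.monotoneOn hi (Set.mem_Iic.mpr le_rfl) hi
  rw [h0, Prod.le_def] at hlo
  rw [hm, Prod.le_def] at hhi
  exact ⟨hlo.1, hlt i hi, hhi.2⟩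

lemma isChain (hD : IsDyckSet n D) : IsChain (· ≤ ·) (D : Set (ℕ × ℕ)) := by
  obtain ⟨m, p, -, -, (hp : IsLatticePath p m), -, rfl⟩ := hD
  rintro x hx y hy -
  obtain ⟨i, hi, rfl⟩ := Finset.mem_image.mp hx
  obtain ⟨j, hj, rfl⟩ := Finset.mem_image.mp hy
  have hi : i ∈ Set.Iic m := Nat.lt_succ_iff.mp (Finset.mem_range.mp hi)
  have hj : j ∈ Set.Iic m := Nat.lt_succ_iff.mp (Finset.mem_range.mp hj)
  rcases le_total i j with hij | hij
  exacts [Or.inl (hp.monotoneOn hi hj hij), Or.inr (hp.monotoneOn hj hi hij)]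

lemma endpoint_mem (hD : IsDyckSet n D) : (n - 1, n) ∈ D := by
  obtain ⟨m, p, -, hm, -, -, rfl⟩ := hD
  exact Finset.mem_image.mpr ⟨m, Finset.self_mem_range_succ m, hm⟩

lemma mem_or_nests (hD : IsDyckSet n D) {q : ℕ × ℕ} (h0 : (2, 3) ≤ q)
    (hm : q ≤ (n - 1, n)) :
    q ∈ D ∨ ∃ x ∈ D, Nests x q ∨ Nests q x := by
  obtain ⟨m, p, h0', hm', (hp : IsLatticePath p m), -, rfl⟩ := hD
  simp only [Finset.mem_image, Finset.mem_range, Nat.lt_succ_iff]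
  rcases hp.exists_eq_or_nests (h0' ▸ h0) (hm' ▸ hm) with h | ⟨i, hi, h⟩
  exacts [Or.inl h, Or.inr ⟨p i, ⟨i, hi, rfl⟩, h⟩]

lemma exists_lt_mem (hD : IsDyckSet n D) {b : ℕ} (hb : 3 ≤ b) (hbn : b < n) :
    ∃ c < b, (c, b + 1) ∈ D := by
  obtain ⟨m, p, h0, hm, (hp : IsLatticePath p m), hlt, rfl⟩ := hD
  obtain ⟨i, hi, hsnd, hstep⟩ :=
    hp.exists_vertical_step_to (h := b + 1) (by rw [h0]; omega) (by rw [hm]; omega)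
  refine ⟨(p i).1, by have := hlt i hi.le; omega, Finset.mem_image.mpr ⟨i + 1, ?_, hstep⟩⟩
  exact Finset.mem_range.mpr (by omega)

lemma card_eq (hD : IsDyckSet n D) : D.card = 2 * n - 5 := by
  obtain ⟨m, p, h0, hm, (hp : IsLatticePath p m), -, rfl⟩ := hD
  have h := hp.fst_add_snd le_rfl
  rw [h0, hm] at h
  dsimp only at h
  rw [hp.card_image_range]
  omega

end IsDyckSet

def anchor (n : ℕ) : Finset (ℕ × ℕ) :=
  {(1, 2), (1, n - 2), (1, n - 1), (1, n)}

lemma fst_eq_one_of_mem_anchor {n : ℕ} {x : ℕ × ℕ} (hx : x ∈ anchor n) : x.1 = 1 := by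
  simp only [anchor, Finset.mem_insert, Finset.mem_singleton] at hx
  rcases hx with rfl | rfl | rfl | rfl <;> rfl

lemma card_anchor {n : ℕ} (hn : 5 ≤ n) : (anchor n).card = 4 := by
  rw [anchor, Finset.card_insert_of_notMem, Finset.card_insert_of_notMem,
    Finset.card_insert_of_notMem, Finset.card_singleton] <;>
  simp only [Finset.mem_insert, Finset.mem_singleton, Prod.mk.injEq] <;> omega

lemma isMinNonface_of_nests {n : ℕ} {x y : ℕ × ℕ} (hxy : Nests x y) (hx : 1 < x.1)
    (hy : y.1 < y.2) (hn : x.2 ≤ n) : IsMinNonface n {x, y} :=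
  Or.inl ⟨x.1, y.1, y.2, x.2, hx, hxy.1, hy, hxy.2, hn, rfl⟩

lemma isFaceDelta_anchor_union {n : ℕ} {D : Finset (ℕ × ℕ)} (hn : 4 ≤ n)
    (hbounds : ∀ x ∈ D, 2 ≤ x.1 ∧ x.1 < x.2 ∧ x.2 ≤ n)
    (hchain : IsChain (· ≤ ·) (D : Set (ℕ × ℕ))) :
    IsFaceDelta n (anchor n ∪ D) := by
  have mem_D : ∀ x ∈ anchor n ∪ D, 1 < x.1 → x ∈ D := fun x hx h1 =>
    (Finset.mem_union.mp hx).resolve_left fun ha => by have := fst_eq_one_of_mem_anchor ha; omega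
  refine ⟨fun x hx => ?_, ?_⟩
  · simp only [groundSet, Finset.mem_filter, Finset.mem_product, Finset.mem_range]
    rcases Finset.mem_union.mp hx with ha | hx
    · simp only [anchor, Finset.mem_insert, Finset.mem_singleton] at ha
      rcases ha with rfl | rfl | rfl | rfl <;> dsimp only <;> omega
    · have := hbounds x hx
      omega
  · rintro N (⟨i, j, k, ℓ, hi, hij, hjk, hkℓ, -, rfl⟩ |
      ⟨i₂, j₁, j₂, j₃, i₃, h₁, h₂, h₃, h₄, h₅, h₆, rfl⟩) hN <;>
      rw [Finset.insert_subset_iff] at hN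
    · have hiℓ := mem_D _ hN.1 hi
      have hjk' := mem_D _ (Finset.singleton_subset_iff.mp hN.2) (by dsimp only; omega)
      rcases hchain.total hiℓ hjk' with h | h <;> rw [Prod.le_def] at h <;> dsimp only at h <;>
        omega
    · rcases Finset.mem_union.mp hN.1 with ha | hd
      · simp only [anchor, Finset.mem_insert, Finset.mem_singleton, Prod.mk.injEq] at ha
        omega
      · have := (hbounds _ hd).1
        dsimp only at this
        omega

lemma isFacetDelta_of_exists_minNonface {n : ℕ} {F : Finset (ℕ × ℕ)} (hF : IsFaceDelta n F)
    (h : ∀ x ∈ groundSet n, x ∉ F → ∃ N, IsMinNonface n N ∧ N ⊆ insert x F) :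
    IsFacetDelta n F := by
  refine ⟨hF, fun F' hF' hsub => hsub.antisymm fun x hx => ?_⟩
  by_contra hxF
  obtain ⟨N, hN, hNsub⟩ := h x (hF'.1 hx) hxF
  exact hF'.2 N hN (hNsub.trans (Finset.insert_subset hx hsub))

lemma IsDyckSet.exists_minNonface_subset_insert {n : ℕ} {D : Finset (ℕ × ℕ)}
    (hD : IsDyckSet n D) {x : ℕ × ℕ} (hx : x ∈ groundSet n) (hxF : x ∉ anchor n ∪ D) :
    ∃ N, IsMinNonface n N ∧ N ⊆ insert x D := by
  obtain ⟨a, b⟩ := x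
  simp only [groundSet, Finset.mem_filter, Finset.mem_product, Finset.mem_range] at hx
  rcases (by omega : a = 1 ∨ 2 ≤ a) with rfl | ha
  · simp only [anchor, Finset.mem_union, Finset.mem_insert, Finset.mem_singleton,
      Prod.mk.injEq, true_and, not_or] at hxF
    obtain ⟨c, hcb, hc⟩ := hD.exists_lt_mem (b := b) (by omega) (by omega)
    have hc2 := (hD.bounds hc).1
    refine ⟨{(1, b), (c, b + 1), (n - 1, n)},
      Or.inr ⟨c, b, b + 1, n - 1, n, hc2, hcb, by omega, by omega, by omega, le_rfl, rfl⟩, ?_⟩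
    simp [Finset.insert_subset_iff, hc, hD.endpoint_mem]
  · rcases hD.mem_or_nests (q := (a, b)) (by rw [Prod.le_def]; omega)
      (by rw [Prod.le_def]; omega) with h | ⟨y, hy, hyq | hqy⟩
    · exact absurd (Finset.mem_union_right _ h) hxF
    · have := hD.bounds hy
      exact ⟨{y, (a, b)}, isMinNonface_of_nests hyq (by omega) (by dsimp only; omega) this.2.2,
        by simp [Finset.insert_subset_iff, hy]⟩
    · have := hD.bounds hy
      exact ⟨{(a, b), y}, isMinNonface_of_nests hqy (by dsimp only; omega) this.2.1 (by omega),
        by simp [Finset.insert_subset_iff, hy]⟩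

lemma IsDyckSet.card_anchor_union {n : ℕ} {D : Finset (ℕ × ℕ)} (hn : 5 ≤ n)
    (hD : IsDyckSet n D) : (anchor n ∪ D).card = 2 * n - 1 := by
  have hdisj : Disjoint (anchor n) D := Finset.disjoint_left.mpr fun x ha hd => by
    have := fst_eq_one_of_mem_anchor ha
    have := (hD.bounds hd).1
    omega
  rw [Finset.card_union_of_disjoint hdisj, card_anchor hn, hD.card_eq]
  omega

/-- For `n ≥ 6`, every set `F = {(1,2),(1,n−2),(1,n−1),(1,n)} ∪ D`, where `D` is a Dyck
path from `(2,3)` to `(n−1,n)`, is a facet of `Δ_n` of cardinality `2n − 1`. -/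
theorem dyck_union_is_facet (n : ℕ) (hn : 6 ≤ n) (D : Finset (ℕ × ℕ))
    (hD : IsDyckSet n D) :
    IsFacetDelta n (({(1, 2), (1, n - 2), (1, n - 1), (1, n)} : Finset (ℕ × ℕ)) ∪ D) ∧
    (({(1, 2), (1, n - 2), (1, n - 1), (1, n)} : Finset (ℕ × ℕ)) ∪ D).card = 2 * n - 1 := by
  change IsFacetDelta n (anchor n ∪ D) ∧ (anchor n ∪ D).card = 2 * n - 1
  refine ⟨isFacetDelta_of_exists_minNonface ?_ fun x hx hxF => ?_,
    hD.card_anchor_union (by omega)⟩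
  · exact isFaceDelta_anchor_union (by omega) (fun x hx => hD.bounds hx) hD.isChain
  · obtain ⟨N, hN, hNsub⟩ := hD.exists_minNonface_subset_insert hx hxF
    exact ⟨N, hN, hNsub.trans (Finset.insert_subset_insert _ Finset.subset_union_right)⟩
end

section
/- Let M be the monomial ideal in K[x_{ij} : 1 ≤ i < j ≤ n] (field K, n ≥ 6) generated by x_{i,ℓ}x_{j,k} for 1 < i < j < k < ℓ ≤ n and x_{1,j_1}x_{i_2,j_2}x_{j_3,i_3} for 1 < i_2 < j_1 < j_2 < j_3 < i_3 ≤ n. Then no monomial in the variables of the set U = {x_{1,2}, x_{1,n−2}, x_{1,n−1}, x_{1,n}} ∪ {x_{i,i+1} : 2 ≤ i ≤ n−1} ∪ {x_{i,i+2} : 2 ≤ i ≤ n−2} lies in M; i.e., K[U] ∩ M = {0}. -/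
/-!
Each generator of `M` is divisible by a variable outside `U`: `x_{i,ℓ}` has `i > 1` and
`ℓ ≥ i + 3`, and `x_{1,j₁}` has `3 ≤ j₁ ≤ n - 3`. Hence the `K`-algebra endomorphism sending
the variables outside `U` to `0` and fixing those in `U` kills `M`, while it is the identity
on `K[U]`.
-/

open MvPolynomial

namespace MvPolynomial

variable {R σ : Type*} [CommSemiring R]

open Classical in
noncomputable def killVarsOutside (s : Set σ) : MvPolynomial σ R →ₐ[R] MvPolynomial σ R :=
  aeval fun i => if i ∈ s then X i else 0

theorem killVarsOutside_apply_of_mem_supported {s : Set σ} {f : MvPolynomial σ R}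
    (hf : f ∈ supported R s) : killVarsOutside s f = f := by
  classical
  refine AlgHom.adjoin_le_equalizer (killVarsOutside s) (AlgHom.id R _) ?_ hf
  rintro _ ⟨i, hi, rfl⟩
  simp [killVarsOutside, hi]

theorem killVarsOutside_eq_zero_of_X_dvd {s : Set σ} {i : σ} {m : MvPolynomial σ R}
    (hi : i ∉ s) (hm : X i ∣ m) : killVarsOutside s m = 0 := by
  classical
  obtain ⟨c, rfl⟩ := hm
  simp [killVarsOutside, hi]

theorem eq_zero_of_mem_supported_of_mem_span {s : Set σ} {G : Set (MvPolynomial σ R)}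
    {f : MvPolynomial σ R} (hfs : f ∈ supported R s) (hfG : f ∈ Ideal.span G)
    (hG : ∀ m ∈ G, ∃ i ∉ s, X i ∣ m) : f = 0 := by
  have hker : Ideal.span G ≤ RingHom.ker (killVarsOutside s : MvPolynomial σ R →ₐ[R] _) := by
    refine Ideal.span_le.2 fun m hm => ?_
    obtain ⟨i, hi, hdvd⟩ := hG m hm
    exact killVarsOutside_eq_zero_of_X_dvd hi hdvd
  rw [← killVarsOutside_apply_of_mem_supported hfs]
  exact hker hfG

end MvPolynomial

def uIndices (n : ℕ) : Set (ℕ × ℕ) :=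
  ({(1, 2), (1, n - 2), (1, n - 1), (1, n)} : Set (ℕ × ℕ)) ∪
    {p | ∃ i, 2 ≤ i ∧ i ≤ n - 1 ∧ p = (i, i + 1)} ∪
    {p | ∃ i, 2 ≤ i ∧ i ≤ n - 2 ∧ p = (i, i + 2)}

theorem mk_notMem_uIndices_of_add_three_le {n i ℓ : ℕ} (hi : 1 < i) (hℓ : i + 3 ≤ ℓ) :
    (i, ℓ) ∉ uIndices n := by
  simp only [uIndices, Set.mem_union, Set.mem_insert_iff, Set.mem_singleton_iff,
    Set.mem_ofPred_eq, Prod.mk.injEq]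
  omega

theorem one_mk_notMem_uIndices {n j : ℕ} (hj : 3 ≤ j) (hjn : j + 3 ≤ n) :
    (1, j) ∉ uIndices n := by
  simp only [uIndices, Set.mem_union, Set.mem_insert_iff, Set.mem_singleton_iff,
    Set.mem_ofPred_eq, Prod.mk.injEq]
  omega

theorem subring_U_meets_ideal_trivially_general {K : Type*} [Field K] (n : ℕ)
    (f : MvPolynomial (ℕ × ℕ) K)
    (hfM : f ∈ Ideal.span { m : MvPolynomial (ℕ × ℕ) K |
      (∃ i j k ℓ, 1 < i ∧ i < j ∧ j < k ∧ k < ℓ ∧ ℓ ≤ n ∧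
        m = X (i, ℓ) * X (j, k)) ∨
      (∃ i₂ j₁ j₂ j₃ i₃, 1 < i₂ ∧ i₂ < j₁ ∧ j₁ < j₂ ∧ j₂ < j₃ ∧ j₃ < i₃ ∧ i₃ ≤ n ∧
        m = X (1, j₁) * X (i₂, j₂) * X (j₃, i₃)) })
    (hfU : f ∈ Algebra.adjoin K
      ((fun p : ℕ × ℕ => (X p : MvPolynomial (ℕ × ℕ) K)) ''
        (({(1, 2), (1, n - 2), (1, n - 1), (1, n)} : Set (ℕ × ℕ)) ∪
          {p | ∃ i, 2 ≤ i ∧ i ≤ n - 1 ∧ p = (i, i + 1)} ∪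
          {p | ∃ i, 2 ≤ i ∧ i ≤ n - 2 ∧ p = (i, i + 2)}))) :
    f = 0 := by
  refine eq_zero_of_mem_supported_of_mem_span (s := uIndices n) hfU hfM ?_
  rintro m (⟨i, j, k, ℓ, hi, hij, hjk, hkℓ, -, rfl⟩ |
    ⟨i₂, j₁, j₂, j₃, i₃, hi₂, h₁, h₂, h₃, h₄, hi₃, rfl⟩)
  · exact ⟨(i, ℓ), mk_notMem_uIndices_of_add_three_le hi (by omega), dvd_mul_right _ _⟩
  · exact ⟨(1, j₁), one_mk_notMem_uIndices (by omega) (by omega),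
      (dvd_mul_right _ _).mul_right _⟩

/-- Let `M` be the monomial ideal in `K[x_{ij} : 1 ≤ i < j ≤ n]` (`n ≥ 6`) generated by
`x_{i,ℓ} x_{j,k}` for `1 < i < j < k < ℓ ≤ n` and `x_{1,j₁} x_{i₂,j₂} x_{j₃,i₃}` for
`1 < i₂ < j₁ < j₂ < j₃ < i₃ ≤ n`.  Then the subalgebra `K[U]` generated by the variables
in `U = {x_{1,2}, x_{1,n−2}, x_{1,n−1}, x_{1,n}} ∪ {x_{i,i+1}} ∪ {x_{i,i+2}}` meets `M`
only in `0`. -/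
theorem subring_U_meets_ideal_trivially {K : Type*} [Field K] (n : ℕ) (hn : 6 ≤ n)
    (f : MvPolynomial (ℕ × ℕ) K)
    (hfM : f ∈ Ideal.span { m : MvPolynomial (ℕ × ℕ) K |
      (∃ i j k ℓ, 1 < i ∧ i < j ∧ j < k ∧ k < ℓ ∧ ℓ ≤ n ∧
        m = X (i, ℓ) * X (j, k)) ∨
      (∃ i₂ j₁ j₂ j₃ i₃, 1 < i₂ ∧ i₂ < j₁ ∧ j₁ < j₂ ∧ j₂ < j₃ ∧ j₃ < i₃ ∧ i₃ ≤ n ∧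
        m = X (1, j₁) * X (i₂, j₂) * X (j₃, i₃)) })
    (hfU : f ∈ Algebra.adjoin K
      ((fun p : ℕ × ℕ => (X p : MvPolynomial (ℕ × ℕ) K)) ''
        (({(1, 2), (1, n - 2), (1, n - 1), (1, n)} : Set (ℕ × ℕ)) ∪
          {p | ∃ i, 2 ≤ i ∧ i ≤ n - 1 ∧ p = (i, i + 1)} ∪
          {p | ∃ i, 2 ≤ i ∧ i ≤ n - 2 ∧ p = (i, i + 2)}))) :
    f = 0 :=
  subring_U_meets_ideal_trivially_general n f hfM hfU
end
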